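/- Let f_M{}^N{}_P{}^Q be the real structure constants defined by ⟦⟦E_M, F^N⟧, E_P⟧ = Σ_Q f_M{}^N{}_P{}^Q E_Q, and for p ≥ 1 set f_{M1⋯Mp}{}^{N1⋯Np} = ⟨E_{M1⋯Mp} | F^{N1⋯Np}⟩ (with f_M{}^N = δ_M^N). Then for every p ≥ 2 the recursion holds: f_{M1⋯Mp}{}^{N1⋯Np} = Σ_{i=1}^{p−1} Σ_{j=i+1}^{p} (−1)^{i+p} Σ_P f_{Mi}{}^{N1}{}_{Mj}{}^P · f_{M1⋯M(i−1) M(i+1)⋯M(j−1) P M(j+1)⋯Mp}{}^{N2⋯Np} − Σ_P f_{Mp}{}^{N1}{}_{M(p−1)}{}^P · f_{M1⋯M(p−2) P}{}^{N2⋯Np}, where in each term of the double sum the index Mi is removed and Mj is replaced by the summation index P. -/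

import Mathlib

/-!
By invariance, `⟨E_{M1⋯Mp} | F^{N1⋯Np}⟩ = ⟨⟦E_{M1⋯Mp}, F^{N1}⟧ | F^{N2⋯Np}⟩`, so it suffices to
expand `⟦E_{M1⋯Mp}, y⟧` for `y ∈ U_1` in nested brackets of length `p − 1`. Writing
`E_{M1⋯Mp} = ⟦E_{M1}, X⟧`, the Jacobi identity gives
`⟦E_{M1}, ⟦X, y⟧⟧ + (−1)^{p−1} ⟦⟦E_{M1}, y⟧, X⟧`. The first term is expanded by induction on `p`;
in the second, the even element `⟦E_{M1}, y⟧` acts on `X` as a derivation, replacing one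
`E_{Mj}` at a time by `Σ_P f_{M1}{}^{N1}{}_{Mj}{}^P E_P`: these are the `i = 1` terms.
-/

/-- Nested bracket `⟦f M1, ⟦f M2, …, ⟦f M(k-1), f Mk⟧⋯⟧⟧` of a family `f : ι → V`
along a tuple of `k` indices (junk value `0` for `k = 0`). -/
def nest {V : Type} [AddCommGroup V] [Module ℝ V] {ι : Type}
    (bb : V →ₗ[ℝ] V →ₗ[ℝ] V) (f : ι → V) : (k : ℕ) → (Fin k → ι) → V
  | 0, _ => 0
  | 1, M => f (M 0)
  | (k + 2), M => bb (f (M 0)) (nest bb f (k + 1) (fun i => M i.succ))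

section Tuples

variable {ι : Type}

theorem Fin.cons_update_comp_succAbove {n : ℕ} (a : ι) (W : Fin (n + 1) → ι)
    (i j : Fin (n + 1)) (Q : ι) :
    Fin.cons a (Function.update W j Q ∘ i.succAbove)
      = Function.update (Fin.cons a W : Fin (n + 2) → ι) j.succ Q ∘ i.succ.succAbove := by
  rw [← Fin.cons_update]
  funext t
  cases t using Fin.cases <;> simp only [Function.comp_apply, Fin.cons_zero, Fin.cons_succ,
    Fin.succ_succAbove_zero, Fin.succ_succAbove_succ]

theorem Fin.update_cons_comp_succ {n : ℕ} (a : ι) (W : Fin (n + 1) → ι) (j : Fin (n + 1))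
    (Q : ι) :
    Function.update (Fin.cons a W : Fin (n + 2) → ι) j.succ Q ∘ Fin.succ
      = Function.update W j Q := by
  rw [← Fin.cons_update]
  rfl

theorem Fin.update_comp_succAbove_of_lt {n : ℕ} (M : Fin (n + 1) → ι) {i j : Fin (n + 1)}
    (hij : i < j) (Q : ι) :
    Function.update M j Q ∘ i.succAbove
      = Function.update (M ∘ i.succAbove) (j.pred (Fin.ne_zero_of_lt hij)) Q := by
  conv_lhs => rw [← Fin.succAbove_pred_of_lt i j hij]
  exact Function.update_comp_eq_of_injective M Fin.succAbove_right_injective _ Q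

theorem Fin.cons_snoc_init_init {n : ℕ} (a : ι) (W : Fin (n + 2) → ι) (Q : ι) :
    (Fin.cons a (Fin.snoc (Fin.init (Fin.init W)) Q) : Fin (n + 2) → ι)
      = Fin.snoc (Fin.init (Fin.init (Fin.cons a W : Fin (n + 3) → ι))) Q := by
  rw [Fin.cons_snoc_eq_snoc_cons]
  congr 1
  funext t
  cases t using Fin.cases <;> rfl

theorem Fin.sum_sum_ite_lt_succ {W : Type} [AddCommMonoid W] {n : ℕ}
    (h : Fin (n + 1) → Fin (n + 1) → W) :
    (∑ i, ∑ j, if i < j then h i j else 0)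
      = (∑ j : Fin n, h 0 j.succ)
        + ∑ i : Fin n, ∑ j : Fin n, if i < j then h i.succ j.succ else 0 := by
  simp only [Fin.sum_univ_succ, Fin.succ_pos, Fin.not_lt_zero, Fin.succ_lt_succ_iff, if_true,
    if_false, zero_add]

end Tuples

section GradedBrackets

variable {V : Type} [AddCommGroup V] [Module ℝ V] (U : ℤ → Submodule ℝ V)
  (bb : V →ₗ[ℝ] V →ₗ[ℝ] V) {ι : Type} (E : ι → V)

theorem nest_one (M : Fin 1 → ι) : nest bb E 1 M = E (M 0) := rfl

theorem nest_cons {k : ℕ} (a : ι) (W : Fin (k + 1) → ι) :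
    nest bb E (k + 2) (Fin.cons a W) = bb (E a) (nest bb E (k + 1) W) := rfl

theorem nest_mem {d : ℤ} (hE : ∀ a, E a ∈ U d)
    (hgrade : ∀ (p q : ℤ) (x y : V), x ∈ U p → y ∈ U q → bb x y ∈ U (p + q)) :
    ∀ (k : ℕ) (M : Fin (k + 1) → ι), nest bb E (k + 1) M ∈ U ((k + 1 : ℕ) * d)
  | 0, M => by simpa [nest_one] using hE (M 0)
  | k + 1, M => by
    rw [← Fin.cons_self_tail M, nest_cons]
    convert hgrade _ _ _ _ (hE (M 0)) (nest_mem hE hgrade k (Fin.tail M)) using 2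
    push_cast
    ring

theorem bracket_nest_of_mem_zero [Fintype ι]
    (hjac : ∀ (p q : ℤ) (x y z : V), x ∈ U p → y ∈ U q →
      bb (bb x y) z = bb x (bb y z) - ((-1 : ℝ) ^ (p * q)) • bb y (bb x z))
    (hE : ∀ a, E a ∈ U (-1)) {h : V} (hh : h ∈ U 0) (c : ι → ι → ℝ)
    (hc : ∀ a, bb h (E a) = ∑ Q, c a Q • E Q) :
    ∀ (k : ℕ) (M : Fin (k + 1) → ι),
      bb h (nest bb E (k + 1) M)
        = ∑ t, ∑ Q, c (M t) Q • nest bb E (k + 1) (Function.update M t Q)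
  | 0, M => by
    simp [nest_one, hc]
  | k + 1, M => by
    obtain ⟨a, W, rfl⟩ : ∃ a W, M = Fin.cons a W :=
      ⟨M 0, Fin.tail M, (Fin.cons_self_tail M).symm⟩
    have hleibniz : bb h (bb (E a) (nest bb E (k + 1) W))
        = bb (bb h (E a)) (nest bb E (k + 1) W) + bb (E a) (bb h (nest bb E (k + 1) W)) := by
      rw [hjac 0 (-1) _ _ _ hh (hE a)]
      simp
    rw [Fin.sum_univ_succ, nest_cons, hleibniz, hc, bracket_nest_of_mem_zero hjac hE hh c hc k W]
    simp only [Fin.cons_zero, Fin.cons_succ, Fin.update_cons_zero, ← Fin.cons_update, nest_cons,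
      map_sum, map_smul, LinearMap.sum_apply, LinearMap.smul_apply]

theorem bracket_bracket_of_mem_neg
    (hgrade : ∀ (p q : ℤ) (x y : V), x ∈ U p → y ∈ U q → bb x y ∈ U (p + q))
    (hanti : ∀ (p q : ℤ) (x y : V), x ∈ U p → y ∈ U q →
      bb x y = (-((-1 : ℝ) ^ (p * q))) • bb y x)
    (hjac : ∀ (p q : ℤ) (x y z : V), x ∈ U p → y ∈ U q →
      bb (bb x y) z = bb x (bb y z) - ((-1 : ℝ) ^ (p * q)) • bb y (bb x z))
    {x X y : V} (n : ℕ) (hx : x ∈ U (-1)) (hX : X ∈ U (-n)) (hy : y ∈ U 1) :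
    bb (bb x X) y = bb x (bb X y) + (-1 : ℝ) ^ n • bb (bb x y) X := by
  have hxy : bb x y ∈ U 0 := by simpa using hgrade _ _ _ _ hx hy
  rw [hjac _ _ _ _ _ hx hX, hanti _ 0 _ _ hX hxy]
  simp [sub_eq_add_neg]

theorem bracket_nest_of_mem_one [Fintype ι]
    (hgrade : ∀ (p q : ℤ) (x y : V), x ∈ U p → y ∈ U q → bb x y ∈ U (p + q))
    (hanti : ∀ (p q : ℤ) (x y : V), x ∈ U p → y ∈ U q →
      bb x y = (-((-1 : ℝ) ^ (p * q))) • bb y x)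
    (hjac : ∀ (p q : ℤ) (x y z : V), x ∈ U p → y ∈ U q →
      bb (bb x y) z = bb x (bb y z) - ((-1 : ℝ) ^ (p * q)) • bb y (bb x z))
    (hE : ∀ a, E a ∈ U (-1)) {y : V} (hy : y ∈ U 1) (g : ι → ι → ι → ℝ)
    (hg : ∀ a b, bb (bb (E a) y) (E b) = ∑ Q, g a b Q • E Q) :
    ∀ (k : ℕ) (M : Fin (k + 2) → ι),
      bb (nest bb E (k + 2) M) y
        = (∑ i : Fin (k + 2), ∑ j : Fin (k + 2),
            if i < j then
              ((-1 : ℝ) ^ ((i : ℕ) + 1 + (k + 2))) •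
                ∑ Q, g (M i) (M j) Q • nest bb E (k + 1) (Function.update M j Q ∘ i.succAbove)
            else 0)
          - ∑ Q, g (M (Fin.last (k + 1))) (M (Fin.last k).castSucc) Q •
              nest bb E (k + 1) (Fin.snoc (Fin.init (Fin.init M)) Q)
  | 0, M => by
    have h1 : bb (E (M 1)) y ∈ U 0 := by simpa using hgrade _ _ _ _ (hE (M 1)) hy
    rw [show nest bb E 2 M = bb (E (M 0)) (E (M 1)) from rfl,
      bracket_bracket_of_mem_neg U bb hgrade hanti hjac 1 (hE _) (by simpa using hE (M 1)) hy,
      hanti _ 0 _ _ (hE _) h1, hg, hg]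
    norm_num [Fin.sum_univ_succ, nest, Fin.snoc]
    rw [add_comm, sub_eq_add_neg]
    rfl
  | k + 1, M => by
    obtain ⟨a, W, rfl⟩ : ∃ a W, M = Fin.cons a W :=
      ⟨M 0, Fin.tail M, (Fin.cons_self_tail M).symm⟩
    have hW : nest bb E (k + 2) W ∈ U (-(k + 2 : ℕ)) := by
      convert nest_mem U bb E hE hgrade (k + 1) W using 2
      push_cast
      ring
    have hay : bb (E a) y ∈ U 0 := by simpa using hgrade _ _ _ _ (hE a) hy
    rw [Fin.sum_sum_ite_lt_succ, nest_cons,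
      bracket_bracket_of_mem_neg U bb hgrade hanti hjac (k + 2) (hE a) hW hy,
      bracket_nest_of_mem_one hgrade hanti hjac hE hy g hg k W,
      bracket_nest_of_mem_zero U bb E hjac hE hay (g a) (hg a) (k + 1) W,
      map_sub, sub_add_eq_add_sub, add_comm (bb (E a) _)]
    simp only [map_sum, map_smul, apply_ite (bb (E a)), map_zero, ← nest_cons,
      Fin.cons_update_comp_succAbove, Fin.cons_snoc_init_init]
    congr 2
    · rw [Finset.smul_sum]
      refine Finset.sum_congr rfl fun j _ => ?_
      simp only [Fin.cons_zero, Fin.cons_succ, Fin.succAbove_zero, Fin.update_cons_comp_succ,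
        Fin.val_zero]
      congr 1
      ring
    · refine Finset.sum_congr rfl fun i _ => Finset.sum_congr rfl fun j _ => ?_
      simp only [Fin.cons_succ, Fin.val_succ]
      congr 2
      ring

end GradedBrackets

/-- The Lean index `i : Fin p` is the paper's index shifted by one, whence the sign
`(−1)^{(i+1)+p}`. -/
theorem form_E_multi_F_multi_recursion
    {V : Type} [AddCommGroup V] [Module ℝ V]
    (U : ℤ → Submodule ℝ V)
    (bb : V →ₗ[ℝ] V →ₗ[ℝ] V)
    (form : V →ₗ[ℝ] V →ₗ[ℝ] ℝ)
    (hgrade : ∀ (p q : ℤ) (x y : V), x ∈ U p → y ∈ U q → bb x y ∈ U (p + q))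
    (hanti : ∀ (p q : ℤ) (x y : V), x ∈ U p → y ∈ U q →
      bb x y = (-((-1 : ℝ) ^ (p * q))) • bb y x)
    (hjac : ∀ (p q : ℤ) (x y z : V), x ∈ U p → y ∈ U q →
      bb (bb x y) z = bb x (bb y z) - ((-1 : ℝ) ^ (p * q)) • bb y (bb x z))
    (hforminv : ∀ x y z : V, form (bb x y) z = form x (bb y z))
    {ι : Type} [Fintype ι]
    (E F : ι → V)
    (hE : ∀ M, E M ∈ U (-1))
    (hF : ∀ M, F M ∈ U 1)
    (f : ι → ι → ι → ι → ℝ)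
    (hf : ∀ M N Pt, bb (bb (E M) (F N)) (E Pt) = ∑ Q : ι, f M N Pt Q • E Q)
    (k : ℕ) :
    ∀ (M N : Fin (k + 2) → ι),
      form (nest bb E (k + 2) M) (nest bb F (k + 2) N)
        = (∑ i : Fin (k + 2), ∑ j : Fin (k + 2),
            if i < j then
              ((-1 : ℝ) ^ ((i : ℕ) + 1 + (k + 2))) *
                ∑ Pq : ι, f (M i) (N 0) (M j) Pq *
                  form (nest bb E (k + 1)
                      (Function.update (fun t : Fin (k + 1) => M (i.succAbove t))
                        ⟨(j : ℕ) - 1, by have := j.isLt; omega⟩ Pq))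
                    (nest bb F (k + 1) (Fin.tail N))
            else 0)
          - ∑ Pq : ι, f (M (Fin.last (k + 1))) (N 0) (M ⟨k, by omega⟩) Pq *
              form (nest bb E (k + 1)
                  (Fin.snoc (fun t : Fin k => M ⟨(t : ℕ), by have := t.isLt; omega⟩) Pq))
                (nest bb F (k + 1) (Fin.tail N)) := by
  intro M N
  have hpair : form (nest bb E (k + 2) M) (nest bb F (k + 2) N)
      = form (bb (nest bb E (k + 2) M) (F (N 0))) (nest bb F (k + 1) (Fin.tail N)) :=
    (hforminv _ _ _).symm
  rw [hpair,
    bracket_nest_of_mem_one U bb E hgrade hanti hjac hE (hF (N 0)) (f · (N 0)) (hf · (N 0))]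
  simp only [map_sub, map_sum, map_smul, LinearMap.sub_apply, LinearMap.sum_apply,
    LinearMap.smul_apply, smul_eq_mul, apply_ite (form · (nest bb F (k + 1) (Fin.tail N))),
    map_zero, LinearMap.zero_apply]
  congr 1
  refine Finset.sum_congr rfl fun i _ => Finset.sum_congr rfl fun j _ => ?_
  split_ifs with hij
  · simp only [Fin.update_comp_succAbove_of_lt M hij]
    rfl
  · rfl
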